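/- Let ⟨,⟩ be a symmetric bilinear form on a finite-dimensional real vector space W which is not semidefinite, with null cone C and nullspace W^⊥. Then C \ W^⊥ is dense in C. -/

import Mathlib

/-!
If `⟨p,p⟩ > 0 > ⟨n,n⟩`, the quadratic `s ↦ ⟨p + s n, p + s n⟩` has a real root `s`, and
`v = p + s n` is a null vector outside `W^⊥`. Every `x ∈ C ∩ W^⊥` is then the limit of the
points `x + t v` (`t → 0`, `t ≠ 0`), which lie in `C \ W^⊥` because `x` pairs trivially with
everything.
-/

open Filter Topology

section Approximation

variable {𝕜 W : Type*} [NontriviallyNormedField 𝕜] [AddCommGroup W] [Module 𝕜 W]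
  {B : W →ₗ[𝕜] W →ₗ[𝕜] 𝕜}

lemma add_smul_apply_of_mem_radical {x : W} (hx : ∀ y, B x y = 0) (t : 𝕜) (v y : W) :
    B (x + t • v) y = t * B v y := by
  simp [hx]

lemma add_smul_self_of_mem_radical (hsymm : ∀ x y, B x y = B y x) {x v : W}
    (hx : ∀ y, B x y = 0) (hv : B v v = 0) (t : 𝕜) :
    B (x + t • v) (x + t • v) = 0 := by
  simp [hsymm v x, hx, hv]

lemma mem_closure_isotropic_diff_radical [TopologicalSpace W] [IsTopologicalAddGroup W]
    [ContinuousSMul 𝕜 W] (hsymm : ∀ x y, B x y = B y x) {x v w : W}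
    (hx : ∀ y, B x y = 0) (hv : B v v = 0) (hvw : B v w ≠ 0) :
    x ∈ closure ({x : W | B x x = 0} \ {x : W | ∀ y, B x y = 0}) := by
  have hlim : Tendsto (fun t : 𝕜 => x + t • v) (𝓝[≠] 0) (𝓝 x) :=
    tendsto_nhdsWithin_of_tendsto_nhds <| by
      simpa using ((tendsto_id (x := 𝓝 (0 : 𝕜))).smul_const v).const_add x
  refine mem_closure_of_tendsto hlim (eventually_nhdsWithin_of_forall fun t ht => ?_)
  refine ⟨add_smul_self_of_mem_radical hsymm hx hv t, fun hrad => ?_⟩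
  have hxw := hrad w
  rw [add_smul_apply_of_mem_radical hx] at hxw
  exact mul_ne_zero ht hvw hxw

end Approximation

lemma exists_isotropic_not_mem_radical {W : Type*} [AddCommGroup W] [Module ℝ W]
    {B : W →ₗ[ℝ] W →ₗ[ℝ] ℝ} (hsymm : ∀ x y, B x y = B y x) {p n : W}
    (hp : 0 < B p p) (hn : B n n < 0) :
    ∃ v, B v v = 0 ∧ B v n ≠ 0 := by
  -- the discriminant `4 (⟨p,n⟩² - ⟨p,p⟩⟨n,n⟩)` is positive
  obtain ⟨s, hs⟩ := exists_quadratic_eq_zero (a := B n n) (b := 2 * B p n) (c := B p p)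
    hn.ne ⟨_, (Real.mul_self_sqrt (by rw [discrim]; nlinarith [sq_nonneg (B p n)])).symm⟩
  have hvv : B (p + s • n) (p + s • n) = B n n * (s * s) + 2 * B p n * s + B p p := by
    simp [hsymm n p]; ring
  refine ⟨p + s • n, hvv.trans hs, fun hvn => ?_⟩
  simp only [map_add, map_smul, LinearMap.add_apply, LinearMap.smul_apply, smul_eq_mul] at hvn
  have hpp : B p p = B n n * (s * s) := by linear_combination hs - 2 * s * hvn
  nlinarith [mul_self_nonneg s]

theorem stmt_7_general {W : Type*} [NormedAddCommGroup W] [NormedSpace ℝ W]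
    (B : W →ₗ[ℝ] W →ₗ[ℝ] ℝ) (hsymm : ∀ x y, B x y = B y x)
    (hpos : ∃ x, 0 < B x x) (hneg : ∃ y, B y y < 0) :
    {x : W | B x x = 0} ⊆
      closure ({x : W | B x x = 0} \ {x : W | ∀ y, B x y = 0}) := by
  obtain ⟨p, hp⟩ := hpos
  obtain ⟨n, hn⟩ := hneg
  obtain ⟨v, hv, hvn⟩ := exists_isotropic_not_mem_radical hsymm hp hn
  intro x hx
  by_cases hrad : ∀ y, B x y = 0
  · exact mem_closure_isotropic_diff_radical hsymm hrad hv hvn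
  · exact subset_closure ⟨hx, hrad⟩

/-- If a symmetric bilinear form is not semidefinite, then the set of nonsingular points
`C \ W^⊥` of its null cone `C` is dense in `C`. -/
theorem stmt_7 {W : Type*} [NormedAddCommGroup W] [NormedSpace ℝ W] [FiniteDimensional ℝ W]
    (B : W →ₗ[ℝ] W →ₗ[ℝ] ℝ) (hsymm : ∀ x y, B x y = B y x)
    (hpos : ∃ x, 0 < B x x) (hneg : ∃ y, B y y < 0) :
    {x : W | B x x = 0} ⊆
      closure ({x : W | B x x = 0} \ {x : W | ∀ y, B x y = 0}) :=
  stmt_7_general B hsymm hpos hneg
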